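/- arXiv:1409.3165 — 4 statements merged into one kernel-verified Lean document; each statement's English description precedes it below -/
import Mathlib

section
/- Let p be the mesh pattern (12, {(0,0),(0,1),(1,1),(1,2),(2,0),(2,2)}). For every n ≥ 1, the number of permutations of length n avoiding p equals n! − Σ_{k=0}^{n−2} Σ_{j=0}^{k} j!·(k−j)!·(n−2−k)!. -/
/-
In an occurrence at positions `a < b`, the shaded boxes force every entry left of `a` above
`π b`, every entry strictly between `a` and `b` below `π a`, and every entry right of `b`
strictly between `π a` and `π b`. These three maps from position intervals to value intervals
are injective and their sizes add up to `n - 2` on both sides, so they are bijections. Hence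
`π` consists of five blocks: `A = a` entries on top, the entry `B = π a`, a block of `B` entries
at the bottom, the entry `B + C + 1 = π b`, and `C` entries in the middle, each block permuted
arbitrarily. The triple `(A, B, C)` is determined by `π`, so exactly `∑_{A+B+C=n-2} A! B! C!`
permutations contain the pattern.
-/

/-- 1-based position boundaries of an occurrence: `posOf x 0 = 0`,
`posOf x i = x_i` (1-based) for `1 ≤ i ≤ k`, and `posOf x i = n+1` for `i > k`. -/
def posOf {k n : ℕ} (x : Fin k → Fin n) (i : ℕ) : ℕ :=
  if h : 1 ≤ i ∧ i ≤ k then (x ⟨i - 1, by omega⟩ : ℕ) + 1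
  else if i = 0 then 0 else n + 1

/-- 1-based value boundaries of an occurrence: `valOf τ x π 0 = 0`,
`valOf τ x π j = y_j`, the `j`-th smallest of the values `π(x_1),…,π(x_k)`
(which equals `π(x_{τ⁻¹(j)})` for an occurrence of the classical pattern `τ`),
and `n+1` for `j > k`. -/
def valOf {k n : ℕ} (τ : Equiv.Perm (Fin k)) (x : Fin k → Fin n)
    (π : Equiv.Perm (Fin n)) (j : ℕ) : ℕ :=
  if h : 1 ≤ j ∧ j ≤ k then (π (x (τ.symm ⟨j - 1, by omega⟩)) : ℕ) + 1
  else if j = 0 then 0 else n + 1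

/-- `π` (a permutation of length `n`, 0-indexed via `Fin n`) contains the mesh
pattern `(τ, R)`, where boxes in `R` are given with 0-based coordinates in `[0,k]²`.
All positions/values are converted to 1-based via `+1`. -/
def MeshOccursIn {k n : ℕ} (τ : Equiv.Perm (Fin k)) (R : Set (ℕ × ℕ))
    (π : Equiv.Perm (Fin n)) : Prop :=
  ∃ x : Fin k → Fin n, StrictMono x ∧
    (∀ a b : Fin k, π (x a) < π (x b) ↔ τ a < τ b) ∧
    ∀ r ∈ R, ∀ z : Fin n,
      ¬ (posOf x r.1 < (z : ℕ) + 1 ∧ (z : ℕ) + 1 < posOf x (r.1 + 1) ∧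
         valOf τ x π r.2 < (π z : ℕ) + 1 ∧ (π z : ℕ) + 1 < valOf τ x π (r.2 + 1))

/-- `π` avoids the mesh pattern `(τ, R)`. -/
def MeshAvoids {k n : ℕ} (τ : Equiv.Perm (Fin k)) (R : Set (ℕ × ℕ))
    (π : Equiv.Perm (Fin n)) : Prop := ¬ MeshOccursIn τ R π

open Equiv Finset

theorem card_perm_comp_eq_of_card_fiber_eq {α ι : Type*} [Fintype α] [DecidableEq α]
    [Fintype ι] [DecidableEq ι] {f g : α → ι}
    (hfg : ∀ i, Fintype.card {a // f a = i} = Fintype.card {a // g a = i}) :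
    Fintype.card {π : Perm α // g ∘ π = f} = ∏ i, (Fintype.card {a // f a = i}).factorial := by
  -- `π₀` matches the fibres of `f` with those of `g`; then `π ↦ π₀⁻¹ * π` identifies the
  -- solutions of `g ∘ π = f` with the stabilizer of `f`.
  let π₀ : Perm α := (sigmaFiberEquiv f).symm.trans
    ((sigmaCongrRight fun i => Fintype.equivOfCardEq (hfg i)).trans (sigmaFiberEquiv g))
  have hπ₀ : g ∘ π₀ = f := funext fun a => (Fintype.equivOfCardEq (hfg _) _).2
  rw [← DomMulAct.stabilizer_card f]
  refine Fintype.card_congr (subtypeEquiv (Equiv.mulLeft π₀⁻¹) fun π => ?_)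
  simp [← hπ₀, Function.comp_def]

theorem Fin.card_subtype_eq_of_iff_Ico {n lo m : ℕ} (hn : lo + m ≤ n) {p : Fin n → Prop}
    [DecidablePred p] (hp : ∀ i : Fin n, p i ↔ lo ≤ i ∧ (i : ℕ) < lo + m) :
    Fintype.card {i // p i} = m := by
  rw [Fintype.card_subtype, ← Nat.add_sub_cancel_left (n := lo) (m := m), ← Nat.card_Ico,
    ← card_map Fin.valEmbedding]
  congr 1
  ext v
  simp only [mem_map, mem_filter, mem_univ, true_and, Fin.valEmbedding_apply, mem_Ico, hp]
  exact ⟨by rintro ⟨i, hi, rfl⟩; exact hi, fun hv => ⟨⟨v, by omega⟩, hv, rfl⟩⟩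

section

variable {n A B C : ℕ}

def IsOccurrence (π : Perm (Fin n)) (a b : Fin n) : Prop :=
  a < b ∧ π a < π b ∧ (∀ z < a, π b < π z) ∧ (∀ z, a < z → z < b → π z < π a) ∧
    ∀ z, b < z → π a < π z ∧ π z < π b

theorem meshOccursIn_iff_exists_isOccurrence (π : Perm (Fin n)) :
    MeshOccursIn (1 : Perm (Fin 2)) {(0,0),(0,1),(1,1),(1,2),(2,0),(2,2)} π ↔
      ∃ a b, IsOccurrence π a b := by
  have hpos : ∀ x : Fin 2 → Fin n, posOf x 0 = 0 ∧ posOf x 1 = (x 0 : ℕ) + 1 ∧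
      posOf x 2 = (x 1 : ℕ) + 1 ∧ posOf x 3 = n + 1 := fun x => by simp [posOf]
  have hval : ∀ x : Fin 2 → Fin n, valOf 1 x π 0 = 0 ∧ valOf 1 x π 1 = (π (x 0) : ℕ) + 1 ∧
      valOf 1 x π 2 = (π (x 1) : ℕ) + 1 ∧ valOf 1 x π 3 = n + 1 := fun x => by
    simp [valOf]; exact ⟨rfl, rfl⟩
  constructor
  · rintro ⟨x, hmono, hpat, hbox⟩
    obtain ⟨p0, p1, p2, p3⟩ := hpos x
    obtain ⟨v0, v1, v2, v3⟩ := hval x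
    have hx : x 0 < x 1 := hmono Fin.zero_lt_one
    have hπx : π (x 0) < π (x 1) := (hpat 0 1).2 Fin.zero_lt_one
    have hne : ∀ z, z ≠ x 0 → z ≠ x 1 → (π z : ℕ) ≠ π (x 0) ∧ (π z : ℕ) ≠ π (x 1) :=
      fun z h0 h1 => ⟨by simpa [Fin.val_eq_val] using h0, by simpa [Fin.val_eq_val] using h1⟩
    refine ⟨x 0, x 1, hx, hπx, fun z hz => ?_, fun z hz₀ hz₁ => ?_, fun z hz => ?_⟩
    · have h₀ := hbox (0, 0) (by simp) z
      have h₁ := hbox (0, 1) (by simp) z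
      have := hne z (by omega) (by omega)
      simp only [Nat.reduceAdd, p0, p1, v0, v1, v2] at h₀ h₁
      omega
    · have h₁ := hbox (1, 1) (by simp) z
      have h₂ := hbox (1, 2) (by simp) z
      have := hne z (by omega) (by omega)
      simp only [Nat.reduceAdd, p1, p2, v1, v2, v3] at h₁ h₂
      omega
    · have h₀ := hbox (2, 0) (by simp) z
      have h₂ := hbox (2, 2) (by simp) z
      have := hne z (by omega) (by omega)
      simp only [Nat.reduceAdd, p2, p3, v0, v1, v2, v3] at h₀ h₂
      omega
  · rintro ⟨a, b, hab, hπab, hbefore, hbetween, hafter⟩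
    obtain ⟨p0, p1, p2, p3⟩ := hpos ![a, b]
    obtain ⟨v0, v1, v2, v3⟩ := hval ![a, b]
    simp only [Matrix.cons_val_zero, Matrix.cons_val_one] at p1 p2 v1 v2
    refine ⟨![a, b], ?_, ?_, ?_⟩
    · intro i j hij
      fin_cases i <;> fin_cases j <;> simp_all
    · intro i j
      fin_cases i <;> fin_cases j <;> simp [hπab, hπab.not_gt]
    · simp only [Set.mem_insert_iff, Set.mem_singleton_iff]
      rintro r (rfl | rfl | rfl | rfl | rfl | rfl) z <;>
        simp only [Nat.reduceAdd, p0, p1, p2, p3, v0, v1, v2, v3] <;> intro ⟨h₁, h₂, h₃, h₄⟩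
      · have := hbefore z (by omega); omega
      · have := hbefore z (by omega); omega
      · have := hbetween z (by omega) (by omega); omega
      · have := hbetween z (by omega) (by omega); omega
      · have := hafter z (by omega); omega
      · have := hafter z (by omega); omega

namespace IsOccurrence

variable {π : Perm (Fin n)} {a b : Fin n}

theorem val_eq (h : IsOccurrence π a b) : (b : ℕ) = a + π a + 1 ∧ (a : ℕ) + π b + 1 = n := by
  obtain ⟨hab, hπab, hbefore, hbetween, hafter⟩ := h
  have h₁ : #(Iio a) ≤ #(Ioi (π b)) := card_le_card_of_injOn π (fun z hz => by
    simpa using hbefore z (by simpa using hz)) π.injective.injOn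
  have h₂ : #(Ioo a b) ≤ #(Iio (π a)) := card_le_card_of_injOn π (fun z hz => by
    simp only [coe_Ioo, Set.mem_Ioo] at hz; simpa using hbetween z hz.1 hz.2) π.injective.injOn
  have h₃ : #(Ioi b) ≤ #(Ioo (π a) (π b)) := card_le_card_of_injOn π (fun z hz => by
    simpa using hafter z (by simpa using hz)) π.injective.injOn
  simp only [Fin.card_Iio, Fin.card_Ioi, Fin.card_Ioo] at h₁ h₂ h₃
  omega

theorem le_of_isOccurrence {a' b' : Fin n} (h : IsOccurrence π a b)
    (h' : IsOccurrence π a' b') : a ≤ a' := by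
  obtain ⟨hab, hπab, hbefore, hbetween, hafter⟩ := h
  obtain ⟨hab', hπab', hbefore', hbetween', hafter'⟩ := h'
  by_contra! ha
  have := hbefore a' ha
  rcases lt_trichotomy b' a with hb' | rfl | hb'
  · have := hafter' a hb'; omega
  · omega
  rcases lt_trichotomy b' b with hb'' | rfl | hb''
  · have := hbetween b' hb' hb''; omega
  · omega
  · have := hafter b' hb''; omega

theorem unique {a' b' : Fin n} (h : IsOccurrence π a b) (h' : IsOccurrence π a' b') :
    a = a' ∧ b = b' := by
  have ha : a = a' := le_antisymm (h.le_of_isOccurrence h') (h'.le_of_isOccurrence h)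
  subst ha
  exact ⟨rfl, by have := h.val_eq; have := h'.val_eq; omega⟩

end IsOccurrence

def positionBlock (A B i : ℕ) : Fin 5 :=
  if i < A then 0 else if i = A then 1 else if i < A + B + 1 then 2
  else if i = A + B + 1 then 3 else 4

-- A value is labelled by the position block that a permutation of this shape maps onto it.
def valueBlock (B C v : ℕ) : Fin 5 :=
  if v < B then 2 else if v = B then 1 else if v < B + C + 1 then 4
  else if v = B + C + 1 then 3 else 0

theorem card_positionBlock_eq (h : A + B + C + 2 = n) (k : Fin 5) :
    Fintype.card {i : Fin n // positionBlock A B i = k} = ![A, 1, B, 1, C] k := by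
  fin_cases k <;>
    [refine Fin.card_subtype_eq_of_iff_Ico (lo := 0) ?_ fun i => ?_;
     refine Fin.card_subtype_eq_of_iff_Ico (lo := A) ?_ fun i => ?_;
     refine Fin.card_subtype_eq_of_iff_Ico (lo := A + 1) ?_ fun i => ?_;
     refine Fin.card_subtype_eq_of_iff_Ico (lo := A + B + 1) ?_ fun i => ?_;
     refine Fin.card_subtype_eq_of_iff_Ico (lo := A + B + 2) ?_ fun i => ?_] <;>
    simp only [positionBlock] <;> (try split_ifs) <;> simp <;> omega

theorem card_valueBlock_eq (h : A + B + C + 2 = n) (k : Fin 5) :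
    Fintype.card {v : Fin n // valueBlock B C v = k} = ![A, 1, B, 1, C] k := by
  fin_cases k <;>
    [refine Fin.card_subtype_eq_of_iff_Ico (lo := B + C + 2) ?_ fun v => ?_;
     refine Fin.card_subtype_eq_of_iff_Ico (lo := B) ?_ fun v => ?_;
     refine Fin.card_subtype_eq_of_iff_Ico (lo := 0) ?_ fun v => ?_;
     refine Fin.card_subtype_eq_of_iff_Ico (lo := B + C + 1) ?_ fun v => ?_;
     refine Fin.card_subtype_eq_of_iff_Ico (lo := B + 1) ?_ fun v => ?_] <;>
    simp only [valueBlock] <;> (try split_ifs) <;> simp <;> omega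

def HasBlockShape (A B C : ℕ) (π : Perm (Fin n)) : Prop :=
  ∀ i : Fin n, valueBlock B C (π i) = positionBlock A B i

theorem card_hasBlockShape (h : A + B + C + 2 = n) :
    Nat.card {π : Perm (Fin n) // HasBlockShape A B C π} =
      A.factorial * B.factorial * C.factorial := by
  have hcomp : ∀ π : Perm (Fin n), HasBlockShape A B C π ↔
      (fun v : Fin n => valueBlock B C v) ∘ π = fun i : Fin n => positionBlock A B i :=
    fun π => funext_iff.symm
  rw [Nat.card_congr (subtypeEquivRight hcomp), Nat.card_eq_fintype_card,
    card_perm_comp_eq_of_card_fiber_eq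
      fun k => (card_positionBlock_eq h k).trans (card_valueBlock_eq h k).symm]
  simp [Fin.prod_univ_five, card_positionBlock_eq h, mul_assoc]

theorem isOccurrence_iff_hasBlockShape (h : A + B + C + 2 = n) {π : Perm (Fin n)}
    {a b : Fin n} (ha : (a : ℕ) = A) (hb : (b : ℕ) = A + B + 1) :
    IsOccurrence π a b ↔ HasBlockShape A B C π := by
  constructor
  · intro hocc i
    have hval := hocc.val_eq
    obtain ⟨-, -, hbefore, hbetween, hafter⟩ := hocc
    simp only [valueBlock, positionBlock]
    rcases lt_trichotomy i a with hi | rfl | hi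
    · have := hbefore i hi
      split_ifs <;> omega
    · split_ifs <;> omega
    rcases lt_trichotomy i b with hi' | rfl | hi'
    · have := hbetween i hi hi'
      split_ifs <;> omega
    · split_ifs <;> omega
    · have := hafter i hi'
      split_ifs <;> omega
  · intro hshape
    simp only [HasBlockShape, valueBlock, positionBlock] at hshape
    have hπa : (π a : ℕ) = B := by have := hshape a; split_ifs at this <;> omega
    have hπb : (π b : ℕ) = B + C + 1 := by have := hshape b; split_ifs at this <;> omega
    refine ⟨by omega, by omega, fun z hz => ?_, fun z hz₁ hz₂ => ?_, fun z hz => ?_⟩ <;>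
      have := hshape z <;> split_ifs at this <;> omega

theorem HasBlockShape.unique {A' B' C' : ℕ} {π : Perm (Fin n)} (h : A + B + C + 2 = n)
    (h' : A' + B' + C' + 2 = n) (hs : HasBlockShape A B C π) (hs' : HasBlockShape A' B' C' π) :
    A = A' ∧ B = B' ∧ C = C' := by
  have hocc := (isOccurrence_iff_hasBlockShape h (a := ⟨A, by omega⟩)
    (b := ⟨A + B + 1, by omega⟩) rfl rfl).mpr hs
  have hocc' := (isOccurrence_iff_hasBlockShape h' (a := ⟨A', by omega⟩)
    (b := ⟨A' + B' + 1, by omega⟩) rfl rfl).mpr hs'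
  obtain ⟨ha, hb⟩ := hocc.unique hocc'
  simp only [Fin.mk.injEq] at ha hb
  omega

theorem meshOccursIn_iff_exists_hasBlockShape (π : Perm (Fin n)) :
    MeshOccursIn (1 : Perm (Fin 2)) {(0,0),(0,1),(1,1),(1,2),(2,0),(2,2)} π ↔
      ∃ A B C, A + B + C + 2 = n ∧ HasBlockShape A B C π := by
  rw [meshOccursIn_iff_exists_isOccurrence]
  constructor
  · rintro ⟨a, b, hocc⟩
    obtain ⟨hb, ha⟩ := hocc.val_eq
    have hπ := hocc.2.1
    exact ⟨a, π a, π b - π a - 1, by omega,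
      (isOccurrence_iff_hasBlockShape (by omega) rfl hb).mp hocc⟩
  · rintro ⟨A, B, C, h, hs⟩
    exact ⟨⟨A, by omega⟩, ⟨A + B + 1, by omega⟩,
      (isOccurrence_iff_hasBlockShape h rfl rfl).mpr hs⟩

theorem card_meshOccursIn :
    Nat.card {π : Perm (Fin n) //
        MeshOccursIn (1 : Perm (Fin 2)) {(0,0),(0,1),(1,1),(1,2),(2,0),(2,2)} π} =
      ∑ k ∈ range (n - 1), ∑ j ∈ range (k + 1),
        j.factorial * (k - j).factorial * (n - 2 - k).factorial := by
  classical
  -- the block sizes `(A, B, C)` are indexed as `(n - 2 - k, j, k - j)`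
  have hunion : univ.filter (fun π : Perm (Fin n) =>
      MeshOccursIn (1 : Perm (Fin 2)) {(0,0),(0,1),(1,1),(1,2),(2,0),(2,2)} π) =
      ((range (n - 1)).sigma fun k => range (k + 1)).biUnion
        fun kj => univ.filter (HasBlockShape (n - 2 - kj.1) kj.2 (kj.1 - kj.2)) := by
    ext π
    simp only [mem_filter, mem_univ, true_and, mem_biUnion, mem_sigma, mem_range,
      meshOccursIn_iff_exists_hasBlockShape]
    constructor
    · rintro ⟨A, B, C, h, hs⟩
      refine ⟨⟨B + C, B⟩, ⟨by dsimp only; omega, by dsimp only; omega⟩, ?_⟩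
      convert hs using 2 <;> dsimp only <;> omega
    · rintro ⟨⟨k, j⟩, ⟨hk, hj⟩, hs⟩
      dsimp only at hk hj hs
      exact ⟨_, _, _, by omega, hs⟩
  rw [Nat.card_eq_fintype_card, Fintype.card_subtype, hunion, card_biUnion, sum_sigma]
  · refine sum_congr rfl fun k hk => sum_congr rfl fun j hj => ?_
    simp only [mem_range] at hk hj
    dsimp only
    rw [← Fintype.card_subtype, ← Nat.card_eq_fintype_card, card_hasBlockShape (by omega)]
    ring
  · rintro ⟨k, j⟩ hkj ⟨k', j'⟩ hkj' hne
    simp only [coe_sigma, Set.mem_sigma_iff, coe_range, Set.mem_Iio] at hkj hkj'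
    refine disjoint_filter.mpr fun π _ hs hs' => hne ?_
    dsimp only at hs hs'
    obtain ⟨hA, hB, -⟩ := hs.unique (by omega) (by omega) hs'
    simp only [Sigma.mk.injEq]
    exact ⟨by omega, by subst hB; rfl⟩

end

theorem stmt16_general (n : ℕ) :
    Nat.card {π : Equiv.Perm (Fin n) //
        MeshAvoids (1 : Equiv.Perm (Fin 2)) {(0,0),(0,1),(1,1),(1,2),(2,0),(2,2)} π} =
      n.factorial -
        ∑ k ∈ Finset.range (n - 1), ∑ j ∈ Finset.range (k + 1),
          j.factorial * (k - j).factorial * (n - 2 - k).factorial := by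
  classical
  have hcompl := Fintype.card_subtype_compl fun π : Perm (Fin n) =>
    MeshOccursIn (1 : Perm (Fin 2)) {(0,0),(0,1),(1,1),(1,2),(2,0),(2,2)} π
  rwa [Fintype.card_perm, Fintype.card_fin, ← Nat.card_eq_fintype_card,
    ← Nat.card_eq_fintype_card, card_meshOccursIn] at hcompl

/-- For `n ≥ 1`, the number of permutations of length `n`
avoiding `(12, {(0,0),(0,1),(1,1),(1,2),(2,0),(2,2)})` equals
`n! − Σ_{k=0}^{n-2} Σ_{j=0}^{k} j!·(k-j)!·(n-2-k)!`. -/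
theorem stmt16 (n : ℕ) (hn : 1 ≤ n) :
    Nat.card {π : Equiv.Perm (Fin n) //
        MeshAvoids (1 : Equiv.Perm (Fin 2)) {(0,0),(0,1),(1,1),(1,2),(2,0),(2,2)} π} =
      n.factorial -
        ∑ k ∈ Finset.range (n - 1), ∑ j ∈ Finset.range (k + 1),
          j.factorial * (k - j).factorial * (n - 2 - k).factorial :=
  stmt16_general n
end

section
/- Let a_n be the number of permutations of length n avoiding the mesh pattern (12, {(0,0),(0,2),(1,0),(1,1),(1,2)}). Then a_0 = 1, a_1 = 1, and a_n = n·a_{n−1} − a_{n−2} for all n ≥ 2. -/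
/-!
An occurrence of the pattern is a *framing ascent*: the shaded middle column forces the two
entries to be adjacent, and the shaded boxes `(0,0)`, `(0,2)` force every earlier value to lie
between them. Write a permutation of length `n + 1` as its last value `p` followed by a
permutation `σ` of length `n` (standardized). Framing ascents of `σ` persist, and the only new
one can sit at the last two positions, which happens exactly when `p = n + 1` and `σ` ends with
its minimum. Hence `a (n + 1) = (n + 1) a n - b n`, where `b n` counts the avoiders of length `n`
ending with their minimum; appending a new minimum to the avoiders of length `n - 1` is a bijection
onto these, so `b n = a (n - 1)`.
-/

open Equiv Finset

def IsFramingAscent {n : ℕ} (π : Perm (Fin n)) (i j : Fin n) : Prop :=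
  (i : ℕ) + 1 = j ∧ π i < π j ∧ ∀ z < i, π i < π z ∧ π z < π j

def HasFramingAscent {n : ℕ} (π : Perm (Fin n)) : Prop :=
  ∃ i j, IsFramingAscent π i j

instance {n : ℕ} : DecidablePred (HasFramingAscent (n := n)) := fun π => by
  unfold HasFramingAscent IsFramingAscent; infer_instance

theorem meshOccursIn_iff_hasFramingAscent {n : ℕ} (π : Perm (Fin n)) :
    MeshOccursIn (1 : Perm (Fin 2)) {(0,0),(0,2),(1,0),(1,1),(1,2)} π ↔ HasFramingAscent π := by
  simp only [MeshOccursIn, Set.forall_mem_insert, Fin.strictMono_iff_lt_succ, Fin.forall_fin_two]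
  simp only [Fin.forall_fin_one, Fin.isValue, Fin.castSucc_zero, Fin.succ_zero_eq_one,
    lt_self_iff_false, Perm.coe_one, id_eq, zero_lt_one, iff_true, true_and, not_lt_zero, iff_false,
    not_lt, and_true, posOf, nonpos_iff_eq_zero, one_ne_zero, zero_le, ↓reduceDIte, ↓reduceIte,
    lt_add_iff_pos_left, Order.lt_add_one_iff, zero_add, Std.le_refl, Nat.one_le_ofNat, and_self,
    tsub_self, Fin.zero_eta, Order.add_one_le_iff, Fin.val_fin_lt, valOf, ← Perm.inv_def, inv_one,
    not_and, Nat.add_one_sub_one, Fin.mk_one, Nat.reduceAdd, Nat.reduceLeDiff, and_false,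
    OfNat.ofNat_ne_zero, Fin.is_lt, Set.mem_singleton_iff, le_add_iff_nonneg_left, Order.lt_two_iff,
    add_tsub_cancel_right, Nat.add_eq_zero_iff, forall_eq, Nat.not_ofNat_le_one,
    add_le_add_iff_right]
  constructor
  · rintro ⟨x, hx, ⟨hπ, -⟩, h00, h02, h10, h11, h12⟩
    have hne {z w : Fin n} (h : z ≠ w) : π z ≠ π w := π.injective.ne h
    refine ⟨x 0, x 1, ?_, hπ, fun z hz => ⟨?_, ?_⟩⟩
    · by_contra hgap
      have hx' := Fin.lt_def.1 hx
      set z : Fin n := ⟨x 0 + 1, by omega⟩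
      have h0z : x 0 < z := Fin.lt_def.2 (by simp [z])
      have hz1 : z < x 1 := Fin.lt_def.2 (by simp [z]; omega)
      have h1 := h11 z h0z hz1 ((h10 z h0z hz1).lt_of_ne (hne h0z.ne))
      exact (π z).isLt.not_ge (h12 z h0z hz1 (h1.lt_of_ne (hne hz1.ne')))
    · exact (h00 z hz).lt_of_ne (hne hz.ne')
    · exact (h02 z hz).lt_of_ne (hne (hz.trans hx).ne)
  · rintro ⟨i, j, hij, hπ, hpre⟩
    have hgap (z : Fin n) : ¬ (i < z ∧ z < j) := by simp only [Fin.lt_def]; omega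
    refine ⟨![i, j], ?_⟩
    have hij' : i < j := Fin.lt_def.2 (by omega)
    simp only [Matrix.cons_val_zero, Matrix.cons_val_one]
    refine ⟨hij', ⟨hπ, hπ.le⟩, fun z hz => (hpre z hz).1.le, fun z hz => (hpre z hz).2.le,
      ?_, ?_, ?_⟩ <;> intro z h1 h2 <;> exact absurd ⟨h1, h2⟩ (hgap z)

def snocPerm {n : ℕ} (p : Fin (n + 1)) (σ : Perm (Fin n)) : Perm (Fin (n + 1)) :=
  finSuccEquivLast.trans ((optionCongr σ).trans (finSuccEquiv' p).symm)

@[simp] theorem snocPerm_last {n : ℕ} (p : Fin (n + 1)) (σ : Perm (Fin n)) :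
    snocPerm p σ (Fin.last n) = p := by
  simp [snocPerm]

@[simp] theorem snocPerm_castSucc {n : ℕ} (p : Fin (n + 1)) (σ : Perm (Fin n)) (i : Fin n) :
    snocPerm p σ i.castSucc = p.succAbove (σ i) := by
  simp [snocPerm]

theorem snocPerm_bijective {n : ℕ} :
    Function.Bijective (fun x : Fin (n + 1) × Perm (Fin n) => snocPerm x.1 x.2) := by
  refine (Fintype.bijective_iff_injective_and_card _).2 ⟨?_, ?_⟩
  · rintro ⟨p, σ⟩ ⟨q, τ⟩ h
    have hpq : p = q := by simpa using congr($h (Fin.last n))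
    subst hpq
    refine Prod.ext rfl (Equiv.ext fun i => ?_)
    simpa using congr($h i.castSucc)
  · simp [Fintype.card_perm, Nat.factorial_succ]

theorem card_filter_snocPerm {n : ℕ} (Q : Perm (Fin (n + 1)) → Prop) [DecidablePred Q] :
    #{x : Fin (n + 1) × Perm (Fin n) | Q (snocPerm x.1 x.2)} = #{π | Q π} :=
  card_equiv (Equiv.ofBijective _ snocPerm_bijective) (by simp)

theorem isFramingAscent_castSucc_snocPerm_iff {n : ℕ} (p : Fin (n + 1)) (σ : Perm (Fin n))
    (i j : Fin n) :
    IsFramingAscent (snocPerm p σ) i.castSucc j.castSucc ↔ IsFramingAscent σ i j := by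
  simp [IsFramingAscent, Fin.forall_fin_succ', Fin.castSucc_lt_castSucc_iff,
    (Fin.castSucc_lt_last i).not_gt]

theorem isFramingAscent_last_iff {m : ℕ} (π : Perm (Fin (m + 2))) :
    IsFramingAscent π (Fin.last m).castSucc (Fin.last (m + 1)) ↔
      π (Fin.last m).castSucc = 0 ∧ π (Fin.last (m + 1)) = Fin.last (m + 1) := by
  set i := (Fin.last m).castSucc
  constructor
  · rintro ⟨-, hlt, hpre⟩
    have hbound (z : Fin (m + 2)) : π i ≤ π z ∧ π z ≤ π (Fin.last (m + 1)) := by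
      rcases lt_trichotomy z i with hz | rfl | hz
      · exact ⟨(hpre z hz).1.le, (hpre z hz).2.le⟩
      · exact ⟨le_rfl, hlt.le⟩
      · obtain rfl : z = Fin.last (m + 1) := Fin.ext (by simp [i, Fin.lt_def] at hz ⊢; omega)
        exact ⟨hlt.le, le_rfl⟩
    refine ⟨nonpos_iff_eq_zero.1 ?_, Fin.last_le_iff.1 ?_⟩
    · simpa using (hbound (π.symm 0)).1
    · simpa using (hbound (π.symm (Fin.last _))).2
  · rintro ⟨h0, hlast⟩
    have hne {z w : Fin (m + 2)} (h : z ≠ w) : π z ≠ π w := π.injective.ne h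
    refine ⟨by simp [i], by simp [h0, hlast, Fin.last_pos], fun z hz => ⟨?_, ?_⟩⟩
    · rw [h0, Fin.pos_iff_ne_zero, ← h0]
      exact hne hz.ne
    · rw [hlast, Fin.lt_last_iff_ne_last, ← hlast]
      exact hne (hz.trans (Fin.castSucc_lt_last _)).ne

theorem hasFramingAscent_snocPerm_iff {m : ℕ} (p : Fin (m + 2)) (σ : Perm (Fin (m + 1))) :
    HasFramingAscent (snocPerm p σ) ↔
      HasFramingAscent σ ∨ (p = Fin.last (m + 1) ∧ σ (Fin.last m) = 0) := by
  constructor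
  · rintro ⟨i, j, h⟩
    induction j using Fin.lastCases with
    | last =>
      obtain rfl : i = (Fin.last m).castSucc := Fin.ext (by have := h.1; simp at this ⊢; omega)
      rw [isFramingAscent_last_iff, snocPerm_last, snocPerm_castSucc] at h
      obtain ⟨h0, rfl⟩ := h
      exact Or.inr ⟨rfl, by simpa using h0⟩
    | cast j =>
      induction i using Fin.lastCases with
      | last => have := h.1; simp at this; omega
      | cast i => exact Or.inl ⟨i, j, (isFramingAscent_castSucc_snocPerm_iff p σ i j).1 h⟩
  · rintro (⟨i, j, h⟩ | ⟨rfl, h0⟩)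
    · exact ⟨_, _, (isFramingAscent_castSucc_snocPerm_iff p σ i j).2 h⟩
    · exact ⟨_, _, (isFramingAscent_last_iff _).2 (by simp [h0])⟩

theorem not_hasFramingAscent_of_le_one {n : ℕ} (hn : n ≤ 1) (π : Perm (Fin n)) :
    ¬ HasFramingAscent π := by
  rintro ⟨i, j, hij, -⟩
  omega

theorem hasFramingAscent_snocPerm_zero_iff {n : ℕ} (σ : Perm (Fin n)) :
    HasFramingAscent (snocPerm 0 σ) ↔ HasFramingAscent σ := by
  cases n with
  | zero => simp [not_hasFramingAscent_of_le_one]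
  | succ m => simp [hasFramingAscent_snocPerm_iff]

def avoiders (n : ℕ) : Finset (Perm (Fin n)) := {π | ¬ HasFramingAscent π}

theorem card_avoiders_of_le_one {n : ℕ} (hn : n ≤ 1) : #(avoiders n) = 1 := by
  rw [avoiders, filter_true_of_mem fun π _ => not_hasFramingAscent_of_le_one hn π, card_univ,
    Fintype.card_perm]
  interval_cases n <;> rfl

theorem card_avoiders_filter_last_eq_zero (m : ℕ) :
    #{σ ∈ avoiders (m + 1) | σ (Fin.last m) = 0} = #(avoiders m) := by
  have hprod : ({x : Fin (m + 1) × Perm (Fin m) |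
      ¬ HasFramingAscent (snocPerm x.1 x.2) ∧ snocPerm x.1 x.2 (Fin.last m) = 0} : Finset _) =
      {0} ×ˢ avoiders m := by
    ext ⟨p, σ⟩
    simp only [mem_filter, mem_univ, true_and, mem_product, mem_singleton, avoiders, snocPerm_last]
    constructor
    · rintro ⟨h, rfl⟩
      exact ⟨rfl, by rwa [hasFramingAscent_snocPerm_zero_iff] at h⟩
    · rintro ⟨rfl, h⟩
      exact ⟨by rwa [hasFramingAscent_snocPerm_zero_iff], rfl⟩
  rw [avoiders, filter_filter, ← card_filter_snocPerm, hprod, card_product, card_singleton,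
    one_mul]

theorem card_avoiders_add_two (m : ℕ) :
    #(avoiders (m + 2)) = (m + 2) * #(avoiders (m + 1)) - #(avoiders m) := by
  have hsub : {Fin.last (m + 1)} ×ˢ {σ ∈ avoiders (m + 1) | σ (Fin.last m) = 0} ⊆
      univ ×ˢ avoiders (m + 1) :=
    product_subset_product (subset_univ _) (filter_subset _ _)
  calc #(avoiders (m + 2))
      = #((univ ×ˢ avoiders (m + 1)) \
          ({Fin.last (m + 1)} ×ˢ {σ ∈ avoiders (m + 1) | σ (Fin.last m) = 0})) := by
        rw [avoiders, ← card_filter_snocPerm]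
        congr 1
        ext ⟨p, σ⟩
        simp only [hasFramingAscent_snocPerm_iff, not_or, not_and, mem_filter, mem_univ, true_and,
          avoiders, singleton_product, mem_sdiff, mem_product, mem_map, Function.Embedding.coeFn_mk,
          Prod.mk.injEq, exists_eq_right_right, and_imp, and_congr_right_iff]
        tauto
    _ = (m + 2) * #(avoiders (m + 1)) - #(avoiders m) := by
        rw [card_sdiff_of_subset hsub, card_product, card_product, card_singleton, one_mul,
          card_univ, Fintype.card_fin, card_avoiders_filter_last_eq_zero]

/-- The number `a n` of permutations of length `n` avoiding
`(12, {(0,0),(0,2),(1,0),(1,1),(1,2)})` satisfies `a 0 = a 1 = 1` and `a n = n·a (n-1) − a (n-2)` for `n ≥ 2`. -/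
theorem stmt17 (a : ℕ → ℕ)
    (ha : ∀ n, a n = Nat.card {π : Equiv.Perm (Fin n) //
      MeshAvoids (1 : Equiv.Perm (Fin 2)) {(0,0),(0,2),(1,0),(1,1),(1,2)} π}) :
    a 0 = 1 ∧ a 1 = 1 ∧ ∀ n, 2 ≤ n → a n = n * a (n - 1) - a (n - 2) := by
  have ha' (n : ℕ) : a n = #(avoiders n) := by
    simp only [ha, MeshAvoids, meshOccursIn_iff_hasFramingAscent, Nat.card_eq_fintype_card,
      Fintype.card_subtype, avoiders]
  refine ⟨by simp [ha', card_avoiders_of_le_one], by simp [ha', card_avoiders_of_le_one], ?_⟩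
  intro n hn
  obtain ⟨m, rfl⟩ := Nat.exists_eq_add_of_le' hn
  simpa [ha'] using card_avoiders_add_two m
end

section
/- Let a_n be the number of permutations of length n avoiding the mesh pattern (12, {(0,0),(0,1),(1,0),(1,1),(1,2)}). Then a_0 = 1, a_1 = 1, and a_n = n·a_{n−1} − a_{n−2} for all n ≥ 2. -/
/-!
An occurrence of the pattern is forced to sit at adjacent positions `i, i + 1`, with
`π i < π (i + 1)` and `π (i + 1)` below every entry before `i`: a *low ascent*.
Split `π` of length `n + 2` into its last value `v` and the standardization `σ` of the
remaining entries. A low ascent of `π` is either one of `σ` or ends at the last position,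
and the latter happens exactly when `σ` ends with its minimum and `v` is the second smallest
value. A permutation ending with its minimum has a low ascent iff the rest has one, so
`a (n + 2) = (n + 2) * a (n + 1) - a n`.
-/

open Equiv

def IsLowAscent {n : ℕ} (π : Perm (Fin n)) (i j : Fin n) : Prop :=
  (i : ℕ) + 1 = j ∧ π i < π j ∧ ∀ z < i, π j < π z

def HasLowAscent {n : ℕ} (π : Perm (Fin n)) : Prop :=
  ∃ i j, IsLowAscent π i j

theorem meshOccursIn_iff_boxes_empty {n : ℕ} (π : Perm (Fin n)) :
    MeshOccursIn (1 : Perm (Fin 2)) {(0,0),(0,1),(1,0),(1,1),(1,2)} π ↔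
      ∃ i j, i < j ∧ π i < π j ∧
        (∀ z < i, ¬ π z < π i) ∧ (∀ z < i, ¬ (π i < π z ∧ π z < π j)) ∧
        (∀ z, i < z → z < j → ¬ π z < π i) ∧
        (∀ z, i < z → z < j → ¬ (π i < π z ∧ π z < π j)) ∧
        ∀ z, i < z → z < j → ¬ π j < π z := by
  have hval (z : Fin n) : ¬ n ≤ (π z : ℕ) := not_le.mpr (π z).is_lt
  have hlt (a b : Fin n) : π a < π b ∧ π a ≤ π b ↔ π a < π b :=
    and_iff_left_of_imp le_of_lt
  simp [MeshOccursIn, Fin.exists_fin_succ_pi, Fin.forall_fin_two, forall_eq_or_imp, posOf, valOf,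
    Fin.strictMono_iff_lt_succ, Equiv.Perm.one_def, hval, hlt]

theorem meshOccursIn_iff_hasLowAscent {n : ℕ} (π : Perm (Fin n)) :
    MeshOccursIn (1 : Perm (Fin 2)) {(0,0),(0,1),(1,0),(1,1),(1,2)} π ↔ HasLowAscent π := by
  rw [meshOccursIn_iff_boxes_empty]
  constructor
  · rintro ⟨i, j, hij, hπij, hbelow, hbetween, hmid₀, hmid₁, hmid₂⟩
    -- the three boxes of the middle column cover every value but `π i` and `π j`
    have hgap : ∀ z, i < z → z < j → False := fun z hiz hzj => by
      have hi : π i < π z :=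
        lt_of_le_of_ne (not_lt.mp (hmid₀ z hiz hzj)) (π.injective.ne hiz.ne)
      have hj : π z < π j :=
        lt_of_le_of_ne (not_lt.mp (hmid₂ z hiz hzj)) (π.injective.ne hzj.ne)
      exact hmid₁ z hiz hzj ⟨hi, hj⟩
    refine ⟨i, j, ?_, hπij, fun z hz => ?_⟩
    · by_contra hne
      exact hgap ⟨i + 1, by omega⟩ (Fin.lt_def.mpr (Nat.lt_succ_self _)) (Fin.lt_def.mpr (by
        change (i : ℕ) + 1 < j
        omega))
    · have hi : π i < π z := lt_of_le_of_ne (not_lt.mp (hbelow z hz)) (π.injective.ne hz.ne')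
      refine lt_of_le_of_ne (not_lt.mp fun h => hbetween z hz ⟨hi, h⟩) ?_
      exact π.injective.ne (hz.trans hij).ne'
  · rintro ⟨i, j, hij, hπij, hbelow⟩
    have hgap : ∀ z, i < z → z < j → False := fun z hiz hzj => by
      rw [Fin.lt_def] at hiz hzj
      omega
    refine ⟨i, j, Fin.lt_def.mpr (by omega), hπij, fun z hz => ?_, fun z hz h => ?_,
      fun z hiz hzj => (hgap z hiz hzj).elim, fun z hiz hzj => (hgap z hiz hzj).elim,
      fun z hiz hzj => (hgap z hiz hzj).elim⟩
    · exact not_lt.mpr (hπij.trans (hbelow z hz)).le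
    · exact h.2.not_gt (hbelow z hz)

/-- Append the value `v` to `σ`, shifting the values `≥ v` of `σ` up by one. -/
def permSnoc {n : ℕ} (σ : Perm (Fin n)) (v : Fin (n + 1)) : Perm (Fin (n + 1)) :=
  ((finSuccEquiv' (Fin.last n)).trans (optionCongr σ)).trans (finSuccEquiv' v).symm

@[simp]
theorem permSnoc_last {n : ℕ} (σ : Perm (Fin n)) (v : Fin (n + 1)) :
    permSnoc σ v (Fin.last n) = v := by
  simp [permSnoc]

@[simp]
theorem permSnoc_castSucc {n : ℕ} (σ : Perm (Fin n)) (v : Fin (n + 1)) (i : Fin n) :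
    permSnoc σ v i.castSucc = v.succAbove (σ i) := by
  simp [permSnoc, finSuccEquiv'_below (Fin.castSucc_lt_last i)]

theorem permSnoc_injective (n : ℕ) :
    Function.Injective fun p : Perm (Fin n) × Fin (n + 1) => permSnoc p.1 p.2 := by
  rintro ⟨σ, v⟩ ⟨σ', v'⟩ h
  obtain rfl : v = v' := by simpa using DFunLike.congr_fun h (Fin.last n)
  have hσ : σ = σ' := Equiv.ext fun i => Fin.succAbove_right_injective (p := v) <| by
    simpa using DFunLike.congr_fun h i.castSucc
  rw [hσ]

noncomputable def permSnocEquiv (n : ℕ) : Perm (Fin n) × Fin (n + 1) ≃ Perm (Fin (n + 1)) :=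
  Equiv.ofBijective _ <| (Fintype.bijective_iff_injective_and_card _).mpr
    ⟨permSnoc_injective n, by simp [Fintype.card_perm, Nat.factorial_succ, mul_comm]⟩

@[simp]
theorem permSnocEquiv_apply {n : ℕ} (p : Perm (Fin n) × Fin (n + 1)) :
    permSnocEquiv n p = permSnoc p.1 p.2 := rfl

theorem isLowAscent_permSnoc_castSucc {n : ℕ} (σ : Perm (Fin n)) (v : Fin (n + 1))
    (i j : Fin n) :
    IsLowAscent (permSnoc σ v) i.castSucc j.castSucc ↔ IsLowAscent σ i j := by
  have hlast : ¬ Fin.last n < i.castSucc := not_lt.mpr (Fin.castSucc_lt_last i).le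
  simp [IsLowAscent, Fin.forall_fin_succ', Fin.succAbove_lt_succAbove_iff, hlast]

theorem hasLowAscent_permSnoc_iff {n : ℕ} (σ : Perm (Fin n)) (v : Fin (n + 1)) :
    HasLowAscent (permSnoc σ v) ↔
      HasLowAscent σ ∨ ∃ i : Fin n, IsLowAscent (permSnoc σ v) i.castSucc (Fin.last n) := by
  have hlast (j : Fin (n + 1)) : ¬ IsLowAscent (permSnoc σ v) (Fin.last n) j := fun h => by
    have := h.1
    rw [Fin.val_last] at this
    omega
  simp [HasLowAscent, Fin.exists_fin_succ', isLowAscent_permSnoc_castSucc, hlast, exists_or]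

theorem hasLowAscent_permSnoc_zero_iff {n : ℕ} (σ : Perm (Fin n)) :
    HasLowAscent (permSnoc σ 0) ↔ HasLowAscent σ := by
  rw [hasLowAscent_permSnoc_iff, or_iff_left]
  rintro ⟨i, -, h, -⟩
  simp at h

theorem isLowAscent_permSnoc_last_iff {n : ℕ} (σ : Perm (Fin (n + 1))) (v : Fin (n + 2)) :
    IsLowAscent (permSnoc σ v) (Fin.last n).castSucc (Fin.last (n + 1)) ↔
      σ (Fin.last n) = 0 ∧ v = 1 := by
  simp only [IsLowAscent, Fin.val_castSucc, Fin.val_last, permSnoc_castSucc, permSnoc_last,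
    Fin.succAbove_lt_iff_castSucc_lt, Fin.forall_fin_succ', Fin.castSucc_lt_castSucc_iff,
    Fin.lt_succAbove_iff_le_castSucc, Fin.castSucc_lt_last, forall_const, lt_self_iff_false,
    IsEmpty.forall_iff, and_true, imp_false, not_lt, Fin.le_last, true_and]
  constructor
  · rintro ⟨hlow, hrest⟩
    have hge (w : Fin (n + 1)) (hw : w ≠ σ (Fin.last n)) : v ≤ w.castSucc := by
      obtain ⟨i, hi⟩ := Fin.exists_castSucc_eq.mpr fun h => hw (by rw [← h, apply_symm_apply])
      simpa [hi] using hrest i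
    have hmin : σ (Fin.last n) = 0 := by
      by_contra hne
      exact (hge 0 (Ne.symm hne)).not_gt (lt_of_le_of_lt (Fin.zero_le _) hlow)
    refine ⟨hmin, Fin.ext ?_⟩
    have hpos : 0 < (v : ℕ) := by
      rw [hmin, Fin.castSucc_zero, Fin.lt_def] at hlow
      exact hlow
    rw [Fin.val_one]
    by_contra hv
    have hn : 1 < n + 1 := by have := v.isLt; omega
    have h1 := hge ⟨1, hn⟩ (by rw [hmin]; exact Fin.ne_of_val_ne one_ne_zero)
    rw [Fin.le_def] at h1
    simp only [Fin.val_castSucc] at h1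
    omega
  · rintro ⟨hmin, rfl⟩
    refine ⟨by simp [hmin], fun i => ?_⟩
    have hne : σ i.castSucc ≠ 0 := hmin ▸ σ.injective.ne (Fin.castSucc_lt_last i).ne
    rw [Fin.le_def, Fin.val_one, Fin.val_castSucc, Nat.one_le_iff_ne_zero]
    exact Fin.val_ne_of_ne hne

theorem hasLowAscent_permSnoc_succ_iff {n : ℕ} (σ : Perm (Fin (n + 1))) (v : Fin (n + 2)) :
    HasLowAscent (permSnoc σ v) ↔ HasLowAscent σ ∨ σ (Fin.last n) = 0 ∧ v = 1 := by
  rw [hasLowAscent_permSnoc_iff, ← isLowAscent_permSnoc_last_iff]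
  refine or_congr_right ⟨fun ⟨i, h⟩ => ?_, fun h => ⟨_, h⟩⟩
  obtain rfl : i = Fin.last n := Fin.ext (by simpa using h.1)
  exact h

theorem Nat.card_subtype_and_add_card_subtype_and_not {α : Type*} [Finite α] (p q : α → Prop) :
    Nat.card {a // p a ∧ q a} + Nat.card {a // p a ∧ ¬ q a} = Nat.card {a // p a} := by
  classical
  rw [← Nat.card_sum]
  exact Nat.card_congr <| ((subtypeSubtypeEquivSubtypeInter p q).symm.sumCongr
    (subtypeSubtypeEquivSubtypeInter p (¬ q ·)).symm).trans (sumCompl _)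

theorem Nat.card_subtype_and_snd_eq {α β : Type*} (p : α → Prop) (b : β) :
    Nat.card {x : α × β // p x.1 ∧ x.2 = b} = Nat.card {a // p a} := by
  rw [Nat.card_congr (subtypeProdEquivProd (q := (· = b))), Nat.card_prod,
    Nat.card_unique (α := {b' // b' = b}), mul_one]

theorem card_avoiders_of_le_one_s18 {n : ℕ} (hn : n ≤ 1) :
    Nat.card {π : Perm (Fin n) // ¬ HasLowAscent π} = 1 := by
  have hnone (π : Perm (Fin n)) : ¬ HasLowAscent π := by
    rintro ⟨i, j, hij, -⟩
    omega
  rw [Nat.card_congr (subtypeUnivEquiv hnone), Nat.card_perm, Nat.card_fin]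
  interval_cases n <;> rfl

theorem card_avoiders_last_eq_zero (n : ℕ) :
    Nat.card {σ : Perm (Fin (n + 1)) // ¬ HasLowAscent σ ∧ σ (Fin.last n) = 0} =
      Nat.card {τ : Perm (Fin n) // ¬ HasLowAscent τ} := by
  rw [← Nat.card_subtype_and_snd_eq (fun τ => ¬ HasLowAscent τ) (0 : Fin (n + 1))]
  refine Nat.card_congr ((permSnocEquiv n).subtypeEquiv fun p => ?_).symm
  simp only [permSnocEquiv_apply, permSnoc_last]
  exact and_congr_left fun h => by rw [h, hasLowAscent_permSnoc_zero_iff]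

theorem card_avoiders_add_two_s18 (n : ℕ) :
    Nat.card {π : Perm (Fin (n + 2)) // ¬ HasLowAscent π} +
        Nat.card {π : Perm (Fin n) // ¬ HasLowAscent π} =
      (n + 2) * Nat.card {π : Perm (Fin (n + 1)) // ¬ HasLowAscent π} := by
  let avoids (p : Perm (Fin (n + 1)) × Fin (n + 2)) : Prop := ¬ HasLowAscent p.1
  let blocked (p : Perm (Fin (n + 1)) × Fin (n + 2)) : Prop := p.1 (Fin.last n) = 0 ∧ p.2 = 1
  have hgood : Nat.card {p // avoids p ∧ ¬ blocked p} =
      Nat.card {π : Perm (Fin (n + 2)) // ¬ HasLowAscent π} :=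
    Nat.card_congr <| (permSnocEquiv (n + 1)).subtypeEquiv fun p => by
      simp [avoids, blocked, hasLowAscent_permSnoc_succ_iff]
  have hblocked : Nat.card {p // avoids p ∧ blocked p} =
      Nat.card {π : Perm (Fin n) // ¬ HasLowAscent π} := by
    calc Nat.card {p // avoids p ∧ blocked p}
        = Nat.card {p : Perm (Fin (n + 1)) × Fin (n + 2) //
            (¬ HasLowAscent p.1 ∧ p.1 (Fin.last n) = 0) ∧ p.2 = 1} :=
          Nat.card_congr (subtypeEquivRight fun p => and_assoc.symm)
      _ = _ := Nat.card_subtype_and_snd_eq (fun σ => ¬ HasLowAscent σ ∧ σ (Fin.last n) = 0) 1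
      _ = _ := card_avoiders_last_eq_zero n
  have hall : Nat.card {p // avoids p} =
      Nat.card {π : Perm (Fin (n + 1)) // ¬ HasLowAscent π} * Nat.card (Fin (n + 2)) := by
    rw [← Nat.card_prod]
    exact Nat.card_congr (prodSubtypeFstEquivSubtypeProd (p := fun σ => ¬ HasLowAscent σ))
  rw [← hgood, ← hblocked, add_comm, Nat.card_subtype_and_add_card_subtype_and_not, hall,
    Nat.card_fin, mul_comm]

/-- The number `a n` of permutations of length `n` avoiding
`(12, {(0,0),(0,1),(1,0),(1,1),(1,2)})` satisfies `a 0 = a 1 = 1` and `a n = n·a (n-1) − a (n-2)` for `n ≥ 2`. -/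
theorem stmt18 (a : ℕ → ℕ)
    (ha : ∀ n, a n = Nat.card {π : Equiv.Perm (Fin n) //
      MeshAvoids (1 : Equiv.Perm (Fin 2)) {(0,0),(0,1),(1,0),(1,1),(1,2)} π}) :
    a 0 = 1 ∧ a 1 = 1 ∧ ∀ n, 2 ≤ n → a n = n * a (n - 1) - a (n - 2) := by
  have hcard (n : ℕ) : a n = Nat.card {π : Perm (Fin n) // ¬ HasLowAscent π} := by
    rw [ha]
    exact Nat.card_congr (subtypeEquivRight fun π => (meshOccursIn_iff_hasLowAscent π).not)
  refine ⟨by rw [hcard, card_avoiders_of_le_one_s18 zero_le_one],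
    by rw [hcard, card_avoiders_of_le_one_s18 le_rfl], fun n hn => ?_⟩
  obtain ⟨m, rfl⟩ := Nat.exists_eq_add_of_le' hn
  have := card_avoiders_add_two_s18 m
  rw [hcard, hcard, hcard, Nat.add_sub_cancel, show m + 2 - 1 = m + 1 by omega]
  omega
end

section
/- A permutation π of length n avoids the mesh pattern (12, {(0,1),(0,2),(1,1),(1,2),(2,0)}) if and only if π is connected, i.e. there is no j with 0 < j < n such that π maps the set {1,…,j} onto {1,…,j}. Consequently, for every n the number of permutations of length n avoiding this pattern equals the number of connected permutations of length n. -/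
/-- A permutation of length `n` is connected if it has no invariant set, i.e.
no `j` with `0 < j < n` such that `π` maps `{1,…,j}` onto `{1,…,j}`
(0-indexed: the set of indices with value `< j`). -/
def IsConnectedPerm {n : ℕ} (π : Equiv.Perm (Fin n)) : Prop :=
  ¬ ∃ j : ℕ, 0 < j ∧ j < n ∧
      (⇑π '' {i : Fin n | (i : ℕ) < j}) = {i : Fin n | (i : ℕ) < j}

/-! An occurrence `(a, b)` of the pattern says exactly that the positions before `b` are the
ones carrying values at most `π a`: the shaded boxes forbid larger values left of `b` (other
than at `a`) and smaller values right of `b`. Counting both sides gives `b = π a + 1`, so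
`π` fixes the prefix of length `b`. Conversely, if `π` fixes the prefix of length `j`, then
`b = j` and `a = π⁻¹ (j - 1)` form an occurrence. -/

namespace Equiv.Perm

variable {n : ℕ} (π : Equiv.Perm (Fin n))

theorem image_setOf_val_lt_eq_iff (j : ℕ) :
    π '' {i : Fin n | (i : ℕ) < j} = {i : Fin n | (i : ℕ) < j} ↔
      ∀ i, (π i : ℕ) < j ↔ (i : ℕ) < j := by
  rw [eq_comm, ← π.preimage_eq_iff_eq_image, Set.ext_iff]
  rfl

theorem val_eq_succ_of_forall_lt_iff_le {b y : Fin n} (h : ∀ z, z < b ↔ π z ≤ y) :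
    (b : ℕ) = y + 1 := by
  have : Finset.Iio b = (Finset.Iic y).map π.symm.toEmbedding := by
    ext z
    simp [h]
  rw [← Fin.card_Iio, ← Fin.card_Iic, this, Finset.card_map]

end Equiv.Perm

section TwoPointPattern

variable {n : ℕ} {π : Equiv.Perm (Fin n)}

theorem forall_notMem_shadedBox_iff {x : Fin 2 → Fin n} (hx : x 0 < x 1)
    (hπx : π (x 0) < π (x 1)) (z : Fin n) :
    (∀ r ∈ ({(0,1),(0,2),(1,1),(1,2),(2,0)} : Set (ℕ × ℕ)),
      ¬ (posOf x r.1 < (z : ℕ) + 1 ∧ (z : ℕ) + 1 < posOf x (r.1 + 1) ∧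
         valOf 1 x π r.2 < (π z : ℕ) + 1 ∧ (π z : ℕ) + 1 < valOf 1 x π (r.2 + 1))) ↔
      (z < x 1 ↔ π z ≤ π (x 0)) := by
  have h0 : (z : ℕ) = x 0 ↔ (π z : ℕ) = π (x 0) := by simp [Fin.val_inj]
  have h1 : (z : ℕ) = x 1 ↔ (π z : ℕ) = π (x 1) := by simp [Fin.val_inj]
  simp [posOf, valOf, ← Equiv.Perm.inv_def]
  omega

theorem meshOccursIn_iff_exists :
    MeshOccursIn (1 : Equiv.Perm (Fin 2)) {(0,1),(0,2),(1,1),(1,2),(2,0)} π ↔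
      ∃ a b : Fin n, a < b ∧ ∀ z, z < b ↔ π z ≤ π a := by
  constructor
  · rintro ⟨x, hmono, hpat, hbox⟩
    have hx : x 0 < x 1 := hmono Fin.zero_lt_one
    have hπx : π (x 0) < π (x 1) := (hpat 0 1).2 Fin.zero_lt_one
    exact ⟨x 0, x 1, hx, fun z =>
      (forall_notMem_shadedBox_iff hx hπx z).1 fun r hr => hbox r hr z⟩
  · rintro ⟨a, b, hab, hb⟩
    have hπab : π a < π b := not_le.1 ((hb b).not.1 (lt_irrefl b))
    refine ⟨![a, b], ?_, ?_, fun r hr z =>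
      (forall_notMem_shadedBox_iff hab hπab z).2 (hb z) r hr⟩
    · simpa [Fin.strictMono_iff_lt_succ] using hab
    · simp [Fin.forall_fin_two, hπab, hπab.le]

theorem not_isConnectedPerm_iff :
    ¬ IsConnectedPerm π ↔
      ∃ j, 0 < j ∧ j < n ∧ ∀ i : Fin n, (π i : ℕ) < j ↔ (i : ℕ) < j := by
  simp [IsConnectedPerm, Equiv.Perm.image_setOf_val_lt_eq_iff]

theorem meshOccursIn_iff_not_isConnectedPerm :
    MeshOccursIn (1 : Equiv.Perm (Fin 2)) {(0,1),(0,2),(1,1),(1,2),(2,0)} π ↔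
      ¬ IsConnectedPerm π := by
  rw [meshOccursIn_iff_exists, not_isConnectedPerm_iff]
  constructor
  · rintro ⟨a, b, hab, hb⟩
    have hba : (b : ℕ) = π a + 1 := π.val_eq_succ_of_forall_lt_iff_le hb
    refine ⟨b, by omega, b.isLt, fun i => ?_⟩
    have := hb i
    rw [Fin.lt_def, Fin.le_def] at this
    omega
  · rintro ⟨j, hj0, hjn, hj⟩
    refine ⟨π.symm ⟨j - 1, by omega⟩, ⟨j, hjn⟩, ?_, fun z => ?_⟩
    · simpa [Fin.lt_def] using (hj (π.symm ⟨j - 1, by omega⟩)).1 (by simp; omega)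
    · have := hj z
      simp only [Fin.lt_def, Fin.le_def, Equiv.apply_symm_apply]
      omega

end TwoPointPattern

/-- A permutation avoids
`(12, {(0,1),(0,2),(1,1),(1,2),(2,0)})` iff it is connected; hence the number
of avoiders of length `n` equals the number of connected permutations of
length `n`. -/
theorem stmt19 :
    (∀ (n : ℕ) (π : Equiv.Perm (Fin n)),
      MeshAvoids (1 : Equiv.Perm (Fin 2)) {(0,1),(0,2),(1,1),(1,2),(2,0)} π ↔
        IsConnectedPerm π) ∧
    ∀ n : ℕ,
      Nat.card {π : Equiv.Perm (Fin n) //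
        MeshAvoids (1 : Equiv.Perm (Fin 2)) {(0,1),(0,2),(1,1),(1,2),(2,0)} π} =
      Nat.card {π : Equiv.Perm (Fin n) // IsConnectedPerm π} := by
  have avoids_iff (n : ℕ) (π : Equiv.Perm (Fin n)) :
      MeshAvoids (1 : Equiv.Perm (Fin 2)) {(0,1),(0,2),(1,1),(1,2),(2,0)} π ↔
        IsConnectedPerm π :=
    not_iff_comm.1 meshOccursIn_iff_not_isConnectedPerm.symm
  exact ⟨avoids_iff, fun n => Nat.card_congr (Equiv.subtypeEquivRight (avoids_iff n))⟩
end
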